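/- arXiv:2005.09491 — 3 statements merged into one kernel-verified Lean document; each statement's English description precedes it below -/
import Mathlib

section
/- In the setting of Dedekind–Kummer with p ∤ disc(g) and 𝔭_i = (p, h_i(α)), if β = b(α) for b ∈ ℤ[X] and 𝔭_i = (p, β), then the reduction of h_i mod p equals gcd(g mod p, b mod p) in F_p[X] (up to a unit, i.e., as monic polynomials). -/
open Polynomial NumberField Ideal

/-- The discriminant of a monic integral polynomial `g`, defined as
`(-1)^(n(n-1)/2) · N_{ℤ[X]/(g) / ℤ}(g'(x))`, which for monic `g` agrees with
`(-1)^(n(n-1)/2) · Res(g, g')`. -/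
noncomputable def polyDisc (g : Polynomial ℤ) : ℤ :=
  (-1) ^ (g.natDegree * (g.natDegree - 1) / 2) *
    Algebra.norm ℤ (AdjoinRoot.mk g (derivative g))

/-!
If `f(α) ∈ (p, h(α))`, then, since `g'(α)` lies in the conductor of `ℤ[α]` (conductor times
different is `(g'(α))`), `g'(α) f(α) = p U(α) + h(α) V(α)` with `U, V ∈ ℤ[X]`. Hence
`g ∣ g' f - p U - h V`, and reducing mod `p` gives `h̄ ∣ ḡ' f̄`. As `ḡ` is a product of distinct
monic irreducibles, it is separable, so `h̄ⱼ` is prime to `ḡ'` and `f(α) ∈ 𝔭ⱼ ↔ h̄ⱼ ∣ f̄`.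
For `β = b(α)` this gives `h̄ᵢ ∣ b̄`, while `h̄ⱼ ∣ b̄` with `j ≠ i` would force `𝔭ᵢ ⊆ 𝔭ⱼ`, hence
`h̄ⱼ ∣ h̄ᵢ`. So `h̄ᵢ` is the only irreducible factor of `ḡ` dividing `b̄`.
-/

theorem Polynomial.Monic.eq_of_dvd_of_irreducible {R : Type*} [CommRing R] {p q : R[X]}
    (hp : p.Monic) (hq : q.Monic) (hp' : Irreducible p) (hq' : Irreducible q) (hpq : p ∣ q) :
    p = q :=
  eq_of_monic_of_associated hp hq (hp'.associated_of_dvd hq' hpq)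

theorem Polynomial.separable_prod_of_injective {F ι : Type*} [Field F] [PerfectField F]
    [Fintype ι] {q : ι → F[X]} (hmonic : ∀ i, (q i).Monic) (hirr : ∀ i, Irreducible (q i))
    (hinj : Function.Injective q) : (∏ i, q i).Separable := by
  refine separable_prod (fun i j hij => ?_) fun i => PerfectField.separable_of_irreducible (hirr i)
  refine (hirr i).coprime_iff_not_dvd.2 fun hdvd => hij (hinj ?_)
  exact (hmonic i).eq_of_dvd_of_irreducible (hmonic j) (hirr i) (hirr j) hdvd

theorem gcd_prod_eq_of_dvd {R ι : Type*} [CommRing R] [IsDomain R] [IsBezout R]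
    [NormalizedGCDMonoid R] {s : Finset ι} {q : ι → R} {b : R} {i : ι} (hi : i ∈ s)
    (hnorm : normalize (q i) = q i) (hdvd : q i ∣ b)
    (hirr : ∀ j ∈ s, j ≠ i → Irreducible (q j)) (hndvd : ∀ j ∈ s, j ≠ i → ¬ q j ∣ b) :
    gcd (∏ j ∈ s, q j) b = q i := by
  classical
  have hcop : IsCoprime (gcd (∏ j ∈ s, q j) b) (∏ j ∈ s.erase i, q j) := by
    refine IsCoprime.prod_right fun j hj => ?_
    obtain ⟨hji, hjs⟩ := Finset.mem_erase.1 hj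
    exact ((hirr j hjs hji).coprime_iff_not_dvd.2
      fun h => hndvd j hjs hji (h.trans (gcd_dvd_right _ _))).symm
  have hle : gcd (∏ j ∈ s, q j) b ∣ q i :=
    hcop.dvd_of_dvd_mul_right (Finset.mul_prod_erase s q hi ▸ gcd_dvd_left _ _)
  have hge : q i ∣ gcd (∏ j ∈ s, q j) b := dvd_gcd (Finset.dvd_prod_of_mem q hi) hdvd
  rw [← normalize_gcd, normalize_eq_normalize hle hge, hnorm]

theorem Polynomial.C_dvd_iff_zmod (n : ℕ) (f : ℤ[X]) :
    C (n : ℤ) ∣ f ↔ f.map (Int.castRingHom (ZMod n)) = 0 := by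
  rw [← mem_span_singleton, ← Set.image_singleton, ← Ideal.map_span, ← ZMod.ker_intCastRingHom,
    ← ker_mapRingHom, RingHom.mem_ker, coe_mapRingHom]

theorem aeval_mem_span_natCast_of_map_dvd {A : Type*} [CommRing A] (x : A) (n : ℕ)
    {h f : ℤ[X]}
    (hdvd : h.map (Int.castRingHom (ZMod n)) ∣ f.map (Int.castRingHom (ZMod n))) :
    aeval x f ∈ span {(n : A), aeval x h} := by
  obtain ⟨q', hq'⟩ := hdvd
  obtain ⟨q, rfl⟩ := map_surjective (Int.castRingHom (ZMod n)) ZMod.intCast_surjective q'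
  obtain ⟨s, hs⟩ := (C_dvd_iff_zmod n (f - h * q)).2 (by
    rw [Polynomial.map_sub, Polynomial.map_mul, hq', sub_self])
  rw [sub_eq_iff_eq_add] at hs
  refine mem_span_pair.2 ⟨aeval x s, aeval x q, ?_⟩
  rw [hs, map_add, map_mul, map_mul, aeval_C, algebraMap_int_eq, eq_intCast, Int.cast_natCast]
  ring

theorem map_dvd_of_aeval_mem_span {R₀ A R : Type*} [CommRing R₀] [IsDomain R₀]
    [IsIntegrallyClosed R₀] [CommRing A] [IsDomain A] [Algebra R₀ A]
    [Module.IsTorsionFree R₀ A] [CommRing R] (φ : R₀ →+* R) {n : R₀} (hn : φ n = 0) {x : A}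
    (hx : IsIntegral R₀ x) {d h f : R₀[X]} (hd : aeval x d ∈ conductor R₀ x)
    (hh : h.map φ ∣ (minpoly R₀ x).map φ) (hcop : IsCoprime (h.map φ) (d.map φ))
    (hf : aeval x f ∈ span {algebraMap R₀ A n, aeval x h}) : h.map φ ∣ f.map φ := by
  obtain ⟨u, v, huv⟩ := mem_span_pair.1 hf
  have hmem : ∀ w : A, ∃ W : R₀[X], aeval x W = aeval x d * w := fun w =>
    (Algebra.adjoin_singleton_eq_range_aeval R₀ x ▸ mem_conductor_iff.1 hd w :)
  obtain ⟨U, hU⟩ := hmem u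
  obtain ⟨V, hV⟩ := hmem v
  have hmin : minpoly R₀ x ∣ d * f - C n * U - h * V := by
    refine minpoly.isIntegrallyClosed_dvd hx ?_
    rw [map_sub, map_sub, map_mul, map_mul, map_mul, aeval_C, hU, hV, ← huv]
    ring
  have hred : h.map φ ∣ d.map φ * f.map φ - h.map φ * V.map φ := by
    simpa [Polynomial.map_sub, Polynomial.map_mul, hn] using hh.trans (map_dvd (mapRingHom φ) hmin)
  exact hcop.dvd_of_dvd_mul_left ((dvd_sub_left (dvd_mul_right _ _)).1 hred)

theorem aeval_derivative_minpoly_mem_conductor (A K L : Type*) {B : Type*} [CommRing A]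
    [Field K] [CommRing B] [Field L] [Algebra A K] [Algebra B L] [Algebra A B] [Algebra K L]
    [Algebra A L] [IsScalarTower A K L] [IsScalarTower A B L] [IsDomain A] [IsFractionRing A K]
    [FiniteDimensional K L] [Algebra.IsSeparable K L] [IsIntegralClosure B A L]
    [IsIntegrallyClosed A] [IsDedekindDomain B] [Module.IsTorsionFree A B]
    (x : B) (hx : Algebra.adjoin K {algebraMap B L x} = ⊤) :
    aeval x (derivative (minpoly A x)) ∈ conductor A x :=
  mul_le_left (J := differentIdeal A B) <| conductor_mul_differentIdeal A K L x hx ▸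
    mem_span_singleton_self _

theorem NumberField.aeval_mem_span_iff_map_dvd {K : Type*} [Field K] [NumberField K] {α : 𝓞 K}
    (hα : Algebra.adjoin ℚ {algebraMap (𝓞 K) K α} = ⊤) (n : ℕ) {h : ℤ[X]}
    (hsep : ((minpoly ℤ α).map (Int.castRingHom (ZMod n))).Separable)
    (hh : h.map (Int.castRingHom (ZMod n)) ∣ (minpoly ℤ α).map (Int.castRingHom (ZMod n)))
    (f : ℤ[X]) :
    aeval α f ∈ span {(n : 𝓞 K), aeval α h} ↔
      h.map (Int.castRingHom (ZMod n)) ∣ f.map (Int.castRingHom (ZMod n)) := by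
  refine ⟨fun hf => ?_, aeval_mem_span_natCast_of_map_dvd α n⟩
  have hcop : IsCoprime (h.map (Int.castRingHom (ZMod n)))
      ((derivative (minpoly ℤ α)).map (Int.castRingHom (ZMod n))) := by
    rw [← derivative_map]
    exact hsep.of_isCoprime_of_dvd_left hh
  refine map_dvd_of_aeval_mem_span (Int.castRingHom (ZMod n)) (n := (n : ℤ)) (by simp)
    (IsIntegralClosure.isIntegral ℤ K α) (aeval_derivative_minpoly_mem_conductor ℤ ℚ K α hα)
    hh hcop ?_
  rwa [map_natCast]

theorem reduction_eq_gcd_of_generator_general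
    (K : Type*) [Field K] [NumberField K] (α : 𝓞 K)
    (hadj : Algebra.adjoin ℚ {(algebraMap (𝓞 K) K α)} = ⊤)
    (g : Polynomial ℤ) (hg : g = minpoly ℤ α)
    (p : ℕ) [hp : Fact p.Prime]
    (r : ℕ) (h : Fin r → Polynomial ℤ)
    (hmonic : ∀ i, (h i).Monic)
    (hirr : ∀ i, Irreducible ((h i).map (Int.castRingHom (ZMod p))))
    (hdist : ∀ i j, i ≠ j →
      (h i).map (Int.castRingHom (ZMod p)) ≠ (h j).map (Int.castRingHom (ZMod p)))
    (hfact : g.map (Int.castRingHom (ZMod p)) =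
      ∏ i, (h i).map (Int.castRingHom (ZMod p)))
    (𝔭 : Fin r → Ideal (𝓞 K))
    (h𝔭 : ∀ i, 𝔭 i = Ideal.span {(p : 𝓞 K), Polynomial.aeval α (h i)})
    (i : Fin r) (b : Polynomial ℤ) (β : 𝓞 K) (hβ : β = Polynomial.aeval α b)
    (hgen : 𝔭 i = Ideal.span {(p : 𝓞 K), β}) :
    (h i).map (Int.castRingHom (ZMod p)) =
      gcd (g.map (Int.castRingHom (ZMod p))) (b.map (Int.castRingHom (ZMod p))) := by
  set c := Int.castRingHom (ZMod p)
  have hdvd_g : ∀ j, (h j).map c ∣ g.map c := fun j => by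
    rw [hfact]
    exact Finset.dvd_prod_of_mem _ (Finset.mem_univ j)
  have hsep : (g.map c).Separable := by
    rw [hfact]
    exact separable_prod_of_injective (fun j => (hmonic j).map c) hirr
      fun j k hjk => by_contra fun hne => hdist j k hne hjk
  have hmem : ∀ j f, aeval α f ∈ 𝔭 j ↔ (h j).map c ∣ f.map c := fun j f => by
    subst hg
    rw [h𝔭 j]
    exact aeval_mem_span_iff_map_dvd hadj p hsep (hdvd_g j) f
  have hbi : (h i).map c ∣ b.map c := by
    rw [← hmem, ← hβ, hgen]
    exact subset_span (by simp)
  have hndvd : ∀ j ≠ i, ¬ (h j).map c ∣ b.map c := by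
    intro j hji hdvd
    have hle : 𝔭 i ≤ 𝔭 j := by
      rw [hgen, span_le, Set.insert_subset_iff, Set.singleton_subset_iff, SetLike.mem_coe,
        SetLike.mem_coe, hβ, hmem j b, h𝔭 j]
      exact ⟨subset_span (by simp), hdvd⟩
    have hhi : aeval α (h i) ∈ 𝔭 j := hle (by rw [h𝔭 i]; exact subset_span (by simp))
    exact hdist j i hji <| ((hmonic j).map c).eq_of_dvd_of_irreducible ((hmonic i).map c)
      (hirr j) (hirr i) ((hmem j (h i)).1 hhi)
  rw [hfact]
  exact (gcd_prod_eq_of_dvd (q := fun j => (h j).map c) (Finset.mem_univ i)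
    ((hmonic i).map c).normalize_eq_self hbi (fun j _ _ => hirr j) fun j _ => hndvd j).symm

/-- In the Dedekind–Kummer setting with `p ∤ disc(g)` and
`𝔭 i = (p, h i (α))`: if `β = b(α)` for `b ∈ ℤ[X]` and `𝔭 i = (p, β)`, then the reduction
of `h i` mod `p` equals `gcd(g mod p, b mod p)` in `F_p[X]` (as monic polynomials, i.e. as
the normalized gcd). -/
theorem reduction_eq_gcd_of_generator
    (K : Type*) [Field K] [NumberField K] (α : 𝓞 K)
    (hadj : Algebra.adjoin ℚ {(algebraMap (𝓞 K) K α)} = ⊤)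
    (g : Polynomial ℤ) (hg : g = minpoly ℤ α)
    (p : ℕ) [hp : Fact p.Prime] (hdisc : ¬ ((p : ℤ) ∣ polyDisc g))
    (r : ℕ) (h : Fin r → Polynomial ℤ)
    (hmonic : ∀ i, (h i).Monic)
    (hirr : ∀ i, Irreducible ((h i).map (Int.castRingHom (ZMod p))))
    (hdist : ∀ i j, i ≠ j →
      (h i).map (Int.castRingHom (ZMod p)) ≠ (h j).map (Int.castRingHom (ZMod p)))
    (hfact : g.map (Int.castRingHom (ZMod p)) =
      ∏ i, (h i).map (Int.castRingHom (ZMod p)))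
    (𝔭 : Fin r → Ideal (𝓞 K))
    (h𝔭 : ∀ i, 𝔭 i = Ideal.span {(p : 𝓞 K), Polynomial.aeval α (h i)})
    (i : Fin r) (b : Polynomial ℤ) (β : 𝓞 K) (hβ : β = Polynomial.aeval α b)
    (hgen : 𝔭 i = Ideal.span {(p : 𝓞 K), β}) :
    (h i).map (Int.castRingHom (ZMod p)) =
      gcd (g.map (Int.castRingHom (ZMod p))) (b.map (Int.castRingHom (ZMod p))) :=
  reduction_eq_gcd_of_generator_general K α hadj g hg p (hp := hp) r h hmonic hirr hdist hfact 𝔭 h𝔭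
    i b β hβ hgen
end

section
/- In the unramified Dedekind–Kummer setting, for β = b(α) generating 𝔭_i = (p, β) together with p, the 𝔭_i-adic valuation of β is positive, while for every other prime 𝔭_j above p (j ≠ i) the 𝔭_j-adic valuation of β is zero. -/
/-!
Since `disc(g) · 𝓞 K ⊆ ℤ[α]`, the discriminant lies in the conductor of `ℤ[α]`, so a prime
`p ∤ disc(g)` does not divide `exponent α` and the Kummer–Dedekind theorem applies: the ideals
`(p, h_j(α))` are maximal, and distinct factors `h̄_j` give distinct ideals. Now `β ∈ 𝔭_i`,
while `β ∈ 𝔭_j` would give `𝔭_i = (p, β) ⊆ 𝔭_j`, hence `𝔭_i = 𝔭_j` by maximality, hence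
`h̄_i = h̄_j`.
-/

open Polynomial NumberField Ideal

open scoped nonZeroDivisors

open RingOfIntegers NumberField.Ideal

theorem isLocalization_algebraMapSubmonoid_of_adjoin_eq_top {K A : Type*} [Field K] [CharZero K]
    [CommRing A] [Algebra A K] (hinj : Function.Injective (algebraMap A K)) (a : A)
    (hadj : Algebra.adjoin ℚ {algebraMap A K a} = ⊤) :
    IsLocalization (Algebra.algebraMapSubmonoid A ℤ⁰) K := by
  refine ⟨?_, fun z => ?_, fun hxy => ⟨1, by rw [hinj hxy]⟩⟩
  · rintro ⟨_, n, hn, rfl⟩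
    simpa using nonZeroDivisors.ne_zero hn
  · obtain ⟨q, rfl⟩ : z ∈ Set.range (aeval (R := ℚ) (algebraMap A K a)) := by
      rw [← AlgHom.coe_range, ← Algebra.adjoin_singleton_eq_range_aeval, hadj]; trivial
    obtain ⟨n, hn, hq⟩ := IsLocalization.integerNormalization_spec ℤ⁰ q
    refine ⟨⟨aeval a (IsLocalization.integerNormalization ℤ⁰ q), ⟨_, n, hn, rfl⟩⟩, ?_⟩
    rw [← aeval_algebraMap_apply K a, ← aeval_map_algebraMap (R := ℤ) ℚ (algebraMap A K a), hq]
    simp [mul_comm]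

theorem cast_norm_adjoinRoot_mk_minpoly {K : Type*} [Field K] [CharZero K] {x : K}
    (hx : IsIntegral ℤ x) (hadj : Algebra.adjoin ℚ {x} = ⊤) (q : ℤ[X]) :
    (Algebra.norm ℤ (AdjoinRoot.mk (minpoly ℤ x) q) : ℚ) = Algebra.norm ℚ (aeval x q) := by
  let _ := (AdjoinRoot.lift (algebraMap ℤ K) x (by rw [← aeval_def, minpoly.aeval])).toAlgebra
  have hmk (q : ℤ[X]) :
      algebraMap (AdjoinRoot (minpoly ℤ x)) K (AdjoinRoot.mk _ q) = aeval x q := by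
    rw [RingHom.algebraMap_toAlgebra, AdjoinRoot.lift_mk, aeval_def]
  have hinj : Function.Injective (algebraMap (AdjoinRoot (minpoly ℤ x)) K) := by
    refine (injective_iff_map_eq_zero _).mpr fun a ha => ?_
    obtain ⟨q, rfl⟩ := AdjoinRoot.mk_surjective a
    rw [hmk] at ha
    exact AdjoinRoot.mk_eq_zero.mpr (minpoly.isIntegrallyClosed_dvd hx ha)
  have : IsLocalization (Algebra.algebraMapSubmonoid (AdjoinRoot (minpoly ℤ x)) ℤ⁰) K := by
    convert isLocalization_algebraMapSubmonoid_of_adjoin_eq_top hinj (AdjoinRoot.root _) (by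
      rwa [← AdjoinRoot.mk_X, hmk, aeval_X])
    exact Subsingleton.elim _ _
  let b := (AdjoinRoot.powerBasis' (minpoly.monic hx)).basis
  have := Module.Free.of_basis b
  have := Module.Finite.of_basis b
  rw [← hmk, Algebra.norm_localization ℤ ℤ⁰, algebraMap_int_eq, eq_intCast]

theorem map_mem_monicFactorsMod {K : Type*} [Field K] {θ : 𝓞 K} {p : ℕ} [Fact p.Prime]
    {Q : ℤ[X]} (hQ : Q.Monic)
    (hirr : Irreducible (Q.map (Int.castRingHom (ZMod p))))
    (hdvd : Q.map (Int.castRingHom (ZMod p)) ∣ (minpoly ℤ θ).map (Int.castRingHom (ZMod p))) :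
    Q.map (Int.castRingHom (ZMod p)) ∈ monicFactorsMod θ p := by
  rw [Multiset.mem_toFinset,
    Polynomial.mem_normalizedFactors_iff (map_monic_ne_zero (minpoly.monic θ.isIntegral))]
  exact ⟨hirr, hQ.map _, hdvd⟩

section NumberField

variable {K : Type*} [Field K] [NumberField K]

theorem polyDisc_minpoly_eq_discr (pb : PowerBasis ℚ K) (hint : IsIntegral ℤ pb.gen) :
    (polyDisc (minpoly ℤ pb.gen) : ℚ) = Algebra.discr ℚ pb.basis := by
  have hmin : minpoly ℚ pb.gen = (minpoly ℤ pb.gen).map (algebraMap ℤ ℚ) :=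
    minpoly.isIntegrallyClosed_eq_field_fractions' ℚ hint
  have hdim : Module.finrank ℚ K = (minpoly ℤ pb.gen).natDegree := by
    rw [pb.finrank, ← pb.natDegree_minpoly, hmin, (minpoly.monic hint).natDegree_map]
  rw [Algebra.discr_powerBasis_eq_norm, hmin, derivative_map, aeval_map_algebraMap,
    ← cast_norm_adjoinRoot_mk_minpoly hint pb.adjoin_gen_eq_top, hdim, polyDisc]
  push_cast
  ring

theorem polyDisc_mem_conductor (α : 𝓞 K)
    (hadj : Algebra.adjoin ℚ {(algebraMap (𝓞 K) K α)} = ⊤) :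
    (polyDisc (minpoly ℤ α) : 𝓞 K) ∈ conductor ℤ α := by
  let pb := PowerBasis.ofAdjoinEqTop (isIntegral_coe α).tower_top hadj
  refine mem_conductor_iff.mpr fun x => ?_
  have H := Algebra.discr_mul_isIntegral_mem_adjoin ℚ (B := pb)
    (isIntegral_coe α) (isIntegral_coe x)
  rw [← polyDisc_minpoly_eq_discr pb (isIntegral_coe α),
    PowerBasis.ofAdjoinEqTop_gen, minpoly_coe] at H
  have hmap : algebraMap (𝓞 K) K (polyDisc (minpoly ℤ α) * x) ∈
      (Algebra.adjoin ℤ {α}).map (IsScalarTower.toAlgHom ℤ (𝓞 K) K) := by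
    rw [← Algebra.adjoin_image, Set.image_singleton]
    convert H using 1
    · rfl
    rw [map_mul, map_intCast, Rat.smul_def, Rat.cast_intCast]
  obtain ⟨y, hy, hyx⟩ := Subalgebra.mem_map.mp hmap
  rwa [← coe_injective hyx]

theorem exponent_dvd_polyDisc (α : 𝓞 K)
    (hadj : Algebra.adjoin ℚ {(algebraMap (𝓞 K) K α)} = ⊤) :
    (exponent α : ℤ) ∣ polyDisc (minpoly ℤ α) := by
  rw [← Ideal.mem_span_singleton, exponent, Int.ideal_span_absNorm_eq_self, under_def, mem_comap,
    algebraMap_int_eq, eq_intCast]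
  exact polyDisc_mem_conductor α hadj

theorem map_eq_of_span_pair_le {θ : 𝓞 K} {p : ℕ} [Fact p.Prime] (hp : ¬ p ∣ exponent θ)
    {Q Q' : ℤ[X]}
    (hQ : Q.map (Int.castRingHom (ZMod p)) ∈ monicFactorsMod θ p)
    (hQ' : Q'.map (Int.castRingHom (ZMod p)) ∈ monicFactorsMod θ p)
    (hle : span {(p : 𝓞 K), aeval θ Q} ≤ span {(p : 𝓞 K), aeval θ Q'}) :
    Q.map (Int.castRingHom (ZMod p)) = Q'.map (Int.castRingHom (ZMod p)) := by
  let e := primesOverSpanEquivMonicFactorsMod (K := K) hp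
  rw [← primesOverSpanEquivMonicFactorsMod_symm_apply_eq_span hp hQ,
    ← primesOverSpanEquivMonicFactorsMod_symm_apply_eq_span hp hQ'] at hle
  have := Ideal.IsMaximal.eq_of_le inferInstance (e.symm ⟨_, hQ'⟩).prop.1.ne_top hle
  simpa using e.symm.injective (Subtype.ext this)

end NumberField

theorem valuation_of_generator_general
    (K : Type*) [Field K] [NumberField K] (α : 𝓞 K)
    (hadj : Algebra.adjoin ℚ {(algebraMap (𝓞 K) K α)} = ⊤)
    (g : Polynomial ℤ) (hg : g = minpoly ℤ α)
    (p : ℕ) (hp : p.Prime) (hdisc : ¬ ((p : ℤ) ∣ polyDisc g))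
    (r : ℕ) (h : Fin r → Polynomial ℤ)
    (hmonic : ∀ i, (h i).Monic)
    (hirr : ∀ i, Irreducible ((h i).map (Int.castRingHom (ZMod p))))
    (hdist : ∀ i j, i ≠ j →
      (h i).map (Int.castRingHom (ZMod p)) ≠ (h j).map (Int.castRingHom (ZMod p)))
    (hfact : g.map (Int.castRingHom (ZMod p)) =
      ∏ i, (h i).map (Int.castRingHom (ZMod p)))
    (𝔭 : Fin r → Ideal (𝓞 K))
    (h𝔭 : ∀ i, 𝔭 i = Ideal.span {(p : 𝓞 K), Polynomial.aeval α (h i)})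
    (i : Fin r) (β : 𝓞 K)
    (hgen : 𝔭 i = Ideal.span {(p : 𝓞 K), β}) :
    0 < emultiplicity (𝔭 i) (Ideal.span {β}) ∧
      ∀ j, j ≠ i → emultiplicity (𝔭 j) (Ideal.span {β}) = 0 := by
  have := Fact.mk hp
  subst hg
  have hexp : ¬ p ∣ exponent α := fun hdvd =>
    hdisc ((Int.natCast_dvd_natCast.mpr hdvd).trans (exponent_dvd_polyDisc α hadj))
  have hmem (j : Fin r) : (h j).map (Int.castRingHom (ZMod p)) ∈ monicFactorsMod α p :=
    map_mem_monicFactorsMod (hmonic j) (hirr j)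
      (hfact ▸ Finset.dvd_prod_of_mem _ (Finset.mem_univ j))
  have hβi : β ∈ 𝔭 i := hgen ▸ subset_span (by simp)
  refine ⟨dvd_iff_emultiplicity_pos.mpr (dvd_iff_le.mpr ((span_singleton_le_iff_mem _).mpr hβi)),
    fun j hji => ?_⟩
  rw [emultiplicity_eq_zero, dvd_iff_le, span_singleton_le_iff_mem]
  intro hβj
  have hle : 𝔭 i ≤ 𝔭 j := by
    rw [hgen, span_le, Set.insert_subset_iff, Set.singleton_subset_iff]
    exact ⟨h𝔭 j ▸ subset_span (by simp), hβj⟩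
  rw [h𝔭 i, h𝔭 j] at hle
  exact hdist i j hji.symm (map_eq_of_span_pair_le hexp (hmem i) (hmem j) hle)

/-- In the unramified Dedekind–Kummer setting, for `β = b(α)` generating
`𝔭 i = (p, β)` together with `p`, the `𝔭 i`-adic valuation of `β` is positive, while for
every other prime `𝔭 j` above `p` (`j ≠ i`) the `𝔭 j`-adic valuation of `β` is zero.
(Here the `𝔭`-adic valuation of `β` is the multiplicity of `𝔭` in the ideal `(β)`.) -/
theorem valuation_of_generator
    (K : Type*) [Field K] [NumberField K] (α : 𝓞 K)
    (hadj : Algebra.adjoin ℚ {(algebraMap (𝓞 K) K α)} = ⊤)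
    (g : Polynomial ℤ) (hg : g = minpoly ℤ α)
    (p : ℕ) (hp : p.Prime) (hdisc : ¬ ((p : ℤ) ∣ polyDisc g))
    (r : ℕ) (h : Fin r → Polynomial ℤ)
    (hmonic : ∀ i, (h i).Monic)
    (hirr : ∀ i, Irreducible ((h i).map (Int.castRingHom (ZMod p))))
    (hdist : ∀ i j, i ≠ j →
      (h i).map (Int.castRingHom (ZMod p)) ≠ (h j).map (Int.castRingHom (ZMod p)))
    (hfact : g.map (Int.castRingHom (ZMod p)) =
      ∏ i, (h i).map (Int.castRingHom (ZMod p)))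
    (𝔭 : Fin r → Ideal (𝓞 K))
    (h𝔭 : ∀ i, 𝔭 i = Ideal.span {(p : 𝓞 K), Polynomial.aeval α (h i)})
    (i : Fin r) (b : Polynomial ℤ) (β : 𝓞 K) (hβ : β = Polynomial.aeval α b)
    (hgen : 𝔭 i = Ideal.span {(p : 𝓞 K), β}) :
    0 < emultiplicity (𝔭 i) (Ideal.span {β}) ∧
      ∀ j, j ≠ i → emultiplicity (𝔭 j) (Ideal.span {β}) = 0 :=
  valuation_of_generator_general K α hadj g hg p hp hdisc r h hmonic hirr hdist hfact 𝔭 h𝔭 i β hgen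
end

section
/- The ordering of nonzero integral ideals of a number field K defined by sorting first by norm, then by the prime-power components at each rational prime (in increasing order of primes, each component sorted by the p-power-norm order), is a total order that is compatible with multiplication: if 𝔞 < 𝔟 then 𝔞𝔠 < 𝔟𝔠 for all nonzero integral ideals 𝔠. -/
open Ideal NumberField

variable {K : Type*} [Field K] [NumberField K]

/-- The exponent of the prime ideal `q` in the factorization of the nonzero ideal `I`. -/
noncomputable def vP (q I : Ideal (𝓞 K)) : ℕ := (emultiplicity q I).toNat

/-- The `p`-part of an ideal `I`: the product of the powers of the primes above `p`
appearing in the factorization of `I`. -/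
noncomputable def pPart (p : ℕ) (I : Ideal (𝓞 K)) : Ideal (𝓞 K) :=
  ∏ᶠ (q : Ideal (𝓞 K)) (_ : q.IsPrime ∧ (p : 𝓞 K) ∈ q ∧ q ≠ ⊥), q ^ (vP q I)

/-- The weight of `I` at `p`: the number of primes above `p` in the factorization of `I`,
counted with multiplicity. -/
noncomputable def pWeight (p : ℕ) (I : Ideal (𝓞 K)) : ℕ :=
  ∑ᶠ (q : Ideal (𝓞 K)) (_ : q.IsPrime ∧ (p : 𝓞 K) ∈ q ∧ q ≠ ⊥), vP q I

/-- Reverse lexicographic comparison at `p` of exponent vectors, with respect to a strict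
order `plt` on the prime ideals: `I` precedes `J` when, at the `plt`-least prime above `p`
where the exponents differ, the exponent of `I` is *larger*. -/
def revLexLt (plt : Ideal (𝓞 K) → Ideal (𝓞 K) → Prop) (p : ℕ) (I J : Ideal (𝓞 K)) : Prop :=
  ∃ q : Ideal (𝓞 K), q.IsPrime ∧ (p : 𝓞 K) ∈ q ∧ q ≠ ⊥ ∧
    (∀ q' : Ideal (𝓞 K), q'.IsPrime → (p : 𝓞 K) ∈ q' → q' ≠ ⊥ → plt q' q → vP q' I = vP q' J) ∧
    vP q J < vP q I

/-- The order on `p`-parts: first by norm, then by weight, then reverse lexicographically. -/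
noncomputable def pLt (plt : Ideal (𝓞 K) → Ideal (𝓞 K) → Prop) (p : ℕ)
    (I J : Ideal (𝓞 K)) : Prop :=
  Ideal.absNorm (pPart p I) < Ideal.absNorm (pPart p J) ∨
    (Ideal.absNorm (pPart p I) = Ideal.absNorm (pPart p J) ∧
      (pWeight p I < pWeight p J ∨
        (pWeight p I = pWeight p J ∧ revLexLt plt p I J)))

/-- The global order on nonzero integral ideals: first by norm, then at the smallest
rational prime where the `p`-parts differ, by the `p`-power-norm order. -/
noncomputable def idealLt (plt : Ideal (𝓞 K) → Ideal (𝓞 K) → Prop)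
    (I J : Ideal (𝓞 K)) : Prop :=
  Ideal.absNorm I < Ideal.absNorm J ∨
    (Ideal.absNorm I = Ideal.absNorm J ∧
      ∃ p : ℕ, p.Prime ∧ (∀ q : ℕ, q.Prime → q < p → pPart q I = pPart q J) ∧
        pPart p I ≠ pPart p J ∧ pLt plt p I J)

/-!
Everything is read off the exponent vectors `q ↦ vP q I`, which are additive under
multiplication and determine `I`. For `p ≠ 0` only the finitely many primes above `p` enter
`pPart p`, `pWeight p` and `revLexLt plt p`, so multiplying by `C` multiplies the norms of the
`p`-parts by the positive number `absNorm (pPart p C)`, shifts weights and exponents by those of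
`C`, and does not change which `p`-parts of the two sides agree: every layer of the
lexicographic order survives. For totality, distinct ideals differ in some exponent, hence in
some `p`-part; at the least such `p`, if norms and weights agree, the `plt`-minimal prime above
`p` among the finitely many where the exponents differ decides the reverse lexicographic
comparison.
-/

section Valuation

variable {q I J : Ideal (𝓞 K)}

theorem emultiplicity_eq_vP (hq : Prime q) (hI : I ≠ ⊥) : emultiplicity q I = vP q I :=
  (ENat.natCast_toNat (finiteMultiplicity_iff_emultiplicity_ne_top.1 (.of_prime_left hq hI))).symm

theorem vP_mul (hq : Prime q) (hI : I ≠ ⊥) (hJ : J ≠ ⊥) : vP q (I * J) = vP q I + vP q J := by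
  have h := emultiplicity_mul hq (a := I) (b := J)
  rw [emultiplicity_eq_vP hq (mul_ne_zero hI hJ), emultiplicity_eq_vP hq hI,
    emultiplicity_eq_vP hq hJ] at h
  exact_mod_cast h

theorem eq_of_forall_vP_eq (hI : I ≠ ⊥) (hJ : J ≠ ⊥) (h : ∀ q, Prime q → vP q I = vP q J) :
    I = J := by
  have hmult : ∀ q, Prime q → emultiplicity q I = emultiplicity q J := fun q hq => by
    rw [emultiplicity_eq_vP hq hI, emultiplicity_eq_vP hq hJ, h q hq]
  exact dvd_antisymm
    ((UniqueFactorizationMonoid.dvd_iff_emultiplicity_le hI).2 fun q hq => (hmult q hq).le)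
    ((UniqueFactorizationMonoid.dvd_iff_emultiplicity_le hJ).2 fun q hq => (hmult q hq).ge)

end Valuation

section PrimesAbove

variable (K) in
def primesAbove (p : ℕ) : Set (Ideal (𝓞 K)) := {q | q.IsPrime ∧ (p : 𝓞 K) ∈ q ∧ q ≠ ⊥}

variable {p : ℕ} {q I J : Ideal (𝓞 K)}

theorem prime_of_mem_primesAbove (hq : q ∈ primesAbove K p) : Prime q :=
  prime_of_isPrime hq.2.2 hq.1

theorem primesAbove_finite (hp : p ≠ 0) : (primesAbove K p).Finite := by
  have hspan : span {(p : 𝓞 K)} ≠ ⊥ := by simpa using hp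
  have : Finite {x // x ∣ span {(p : 𝓞 K)}} :=
    (UniqueFactorizationMonoid.fintypeSubtypeDvd _ hspan).finite
  exact (Set.finite_coe_iff.mp this).subset fun q hq =>
    dvd_iff_le.2 ((span_singleton_le_iff_mem _).2 hq.2.1)

theorem exists_prime_mem_primesAbove (hq : q.IsPrime) (hq₀ : q ≠ ⊥) :
    ∃ p : ℕ, p.Prime ∧ q ∈ primesAbove K p := by
  have hmem :
      ((absNorm q).primeFactorsList.map (Nat.cast : ℕ → 𝓞 K) : Multiset (𝓞 K)).prod ∈ q := by
    rw [Multiset.prod_coe, ← Nat.cast_list_prod,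
      Nat.prod_primeFactorsList (absNorm_eq_zero_iff.not.2 hq₀)]
    exact absNorm_mem q
  obtain ⟨_, hx, hxq⟩ := (hq.multiset_prod_mem_iff_exists_mem _).1 hmem
  obtain ⟨p, hp, rfl⟩ := List.mem_map.1 hx
  exact ⟨p, Nat.prime_of_mem_primeFactorsList hp, hq, hxq, hq₀⟩

theorem pPart_eq_prod (hp : p ≠ 0) :
    pPart p I = ∏ q ∈ (primesAbove_finite hp).toFinset, q ^ vP q I :=
  finprod_mem_eq_finite_toFinset_prod _ _

theorem pPart_ne_bot (hp : p ≠ 0) : pPart p I ≠ ⊥ := by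
  rw [pPart_eq_prod hp]
  exact Finset.prod_ne_zero_iff.2 fun q hq =>
    pow_ne_zero _ (prime_of_mem_primesAbove ((Set.Finite.mem_toFinset _).1 hq)).ne_zero

theorem vP_pPart (hp : p ≠ 0) (hq : q ∈ primesAbove K p) : vP q (pPart p I) = vP q I := by
  have hfin := primesAbove_finite (K := K) hp
  have hq' := prime_of_mem_primesAbove hq
  have h : emultiplicity q (pPart p I) = vP q I := by
    calc emultiplicity q (pPart p I)
        = ∑ r ∈ hfin.toFinset, emultiplicity q (r ^ vP r I) := by
          rw [pPart_eq_prod hp, Finset.emultiplicity_prod hq']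
      _ = emultiplicity q (q ^ vP q I) := by
          refine Finset.sum_eq_single q (fun r hr hrq => emultiplicity_eq_zero.2 fun hdvd => ?_)
            fun hq'' => absurd (hfin.mem_toFinset.2 hq) hq''
          have hr := prime_of_mem_primesAbove (hfin.mem_toFinset.1 hr)
          exact hrq ((prime_dvd_prime_iff_eq hq' hr).1 (hq'.dvd_of_dvd_pow hdvd)).symm
      _ = vP q I := emultiplicity_pow_self_of_prime hq' _
  rw [vP, h, ENat.toNat_natCast]

omit [NumberField K] in
theorem pPart_congr (h : ∀ q ∈ primesAbove K p, vP q I = vP q J) : pPart p I = pPart p J :=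
  finprod_mem_congr rfl fun q hq => by rw [h q hq]

theorem pPart_eq_pPart_iff (hp : p ≠ 0) :
    pPart p I = pPart p J ↔ ∀ q ∈ primesAbove K p, vP q I = vP q J :=
  ⟨fun h q hq => by rw [← vP_pPart hp hq, h, vP_pPart hp hq], pPart_congr⟩

omit [NumberField K] in
theorem pWeight_congr (h : ∀ q ∈ primesAbove K p, vP q I = vP q J) :
    pWeight p I = pWeight p J :=
  finsum_mem_congr rfl h

theorem pPart_mul (hp : p ≠ 0) (hI : I ≠ ⊥) (hJ : J ≠ ⊥) :
    pPart p (I * J) = pPart p I * pPart p J :=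
  calc pPart p (I * J) = ∏ᶠ q ∈ primesAbove K p, q ^ vP q I * q ^ vP q J :=
        finprod_mem_congr rfl fun q hq => by
          rw [vP_mul (prime_of_mem_primesAbove hq) hI hJ, pow_add]
    _ = pPart p I * pPart p J := finprod_mem_mul_distrib (primesAbove_finite hp)

theorem pWeight_mul (hp : p ≠ 0) (hI : I ≠ ⊥) (hJ : J ≠ ⊥) :
    pWeight p (I * J) = pWeight p I + pWeight p J :=
  calc pWeight p (I * J) = ∑ᶠ q ∈ primesAbove K p, (vP q I + vP q J) :=
        finsum_mem_congr rfl fun _ hq => vP_mul (prime_of_mem_primesAbove hq) hI hJ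
    _ = pWeight p I + pWeight p J := finsum_mem_add_distrib (primesAbove_finite hp)

end PrimesAbove

section RevLex

variable {plt : Ideal (𝓞 K) → Ideal (𝓞 K) → Prop} {p : ℕ} {I J L I' J' C : Ideal (𝓞 K)}

omit [NumberField K] in
theorem revLexLt_iff : revLexLt plt p I J ↔ ∃ q ∈ primesAbove K p,
    (∀ q' ∈ primesAbove K p, plt q' q → vP q' I = vP q' J) ∧ vP q J < vP q I :=
  ⟨fun ⟨q, h₁, h₂, h₃, hpre, hlt⟩ =>
      ⟨q, ⟨h₁, h₂, h₃⟩, fun q' hq' => hpre q' hq'.1 hq'.2.1 hq'.2.2, hlt⟩,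
    fun ⟨q, hq, hpre, hlt⟩ =>
      ⟨q, hq.1, hq.2.1, hq.2.2, fun q' h₁ h₂ h₃ => hpre q' ⟨h₁, h₂, h₃⟩, hlt⟩⟩

omit [NumberField K] in
theorem revLexLt_trans (htrans : ∀ a b c, plt a b → plt b c → plt a c)
    (htot : ∀ q q' : Ideal (𝓞 K), q.IsPrime → q'.IsPrime → q ≠ ⊥ → q' ≠ ⊥ → q ≠ q' →
      plt q q' ∨ plt q' q)
    (h₁ : revLexLt plt p I J) (h₂ : revLexLt plt p J L) : revLexLt plt p I L := by
  rw [revLexLt_iff] at *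
  obtain ⟨q₁, hq₁, hpre₁, hlt₁⟩ := h₁
  obtain ⟨q₂, hq₂, hpre₂, hlt₂⟩ := h₂
  obtain rfl | hne := eq_or_ne q₁ q₂
  · exact ⟨q₁, hq₁, fun q hq hlt => (hpre₁ q hq hlt).trans (hpre₂ q hq hlt), hlt₂.trans hlt₁⟩
  rcases htot q₁ q₂ hq₁.1 hq₂.1 hq₁.2.2 hq₂.2.2 hne with h | h
  · refine ⟨q₁, hq₁, fun q hq hlt => (hpre₁ q hq hlt).trans (hpre₂ q hq (htrans _ _ _ hlt h)), ?_⟩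
    rwa [← hpre₂ q₁ hq₁ h]
  · refine ⟨q₂, hq₂, fun q hq hlt => (hpre₁ q hq (htrans _ _ _ hlt h)).trans (hpre₂ q hq hlt), ?_⟩
    rwa [hpre₁ q₂ hq₂ h]

omit [NumberField K] in
theorem revLexLt_congr (hI : ∀ q ∈ primesAbove K p, vP q I = vP q I')
    (hJ : ∀ q ∈ primesAbove K p, vP q J = vP q J') (h : revLexLt plt p I J) :
    revLexLt plt p I' J' := by
  rw [revLexLt_iff] at *
  obtain ⟨q, hq, hpre, hlt⟩ := h
  refine ⟨q, hq, fun q' hq' hlt' => ?_, by rwa [← hI q hq, ← hJ q hq]⟩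
  rw [← hI q' hq', ← hJ q' hq', hpre q' hq' hlt']

theorem revLexLt_or_revLexLt (htrans : ∀ a b c, plt a b → plt b c → plt a c)
    (hirr : ∀ a, ¬ plt a a) (hp : p ≠ 0) (hne : ∃ q ∈ primesAbove K p, vP q I ≠ vP q J) :
    revLexLt plt p I J ∨ revLexLt plt p J I := by
  have : IsStrictOrder (Ideal (𝓞 K)) plt := { irrefl := hirr, trans := htrans }
  set D := {q ∈ primesAbove K p | vP q I ≠ vP q J}
  have hD : D.Finite := (primesAbove_finite hp).subset fun _ hq => hq.1
  obtain ⟨q₀, hq₀⟩ := hne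
  obtain ⟨⟨q, hqD⟩, -, hmin⟩ := hD.wellFoundedOn (r := plt) |>.has_min Set.univ
    ⟨⟨q₀, hq₀⟩, trivial⟩
  have hpre : ∀ q' ∈ primesAbove K p, plt q' q → vP q' I = vP q' J := fun q' hq' hlt =>
    of_not_not fun hne' => hmin ⟨q', hq', hne'⟩ trivial hlt
  simp only [revLexLt_iff]
  rcases hqD.2.lt_or_gt with hlt | hlt
  · exact .inr ⟨q, hqD.1, fun q' hq' hlt' => (hpre q' hq' hlt').symm, hlt⟩
  · exact .inl ⟨q, hqD.1, hpre, hlt⟩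

theorem revLexLt_mul_right (hI : I ≠ ⊥) (hJ : J ≠ ⊥) (hC : C ≠ ⊥)
    (h : revLexLt plt p I J) : revLexLt plt p (I * C) (J * C) := by
  rw [revLexLt_iff] at *
  obtain ⟨q, hq, hpre, hlt⟩ := h
  have hmul : ∀ q ∈ primesAbove K p, ∀ X ≠ ⊥, vP q (X * C) = vP q X + vP q C :=
    fun q hq X hX => vP_mul (prime_of_mem_primesAbove hq) hX hC
  refine ⟨q, hq, fun q' hq' hlt' => ?_, ?_⟩
  · rw [hmul q' hq' I hI, hmul q' hq' J hJ, hpre q' hq' hlt']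
  · rw [hmul q hq I hI, hmul q hq J hJ]
    omega

end RevLex

section PLt

variable {plt : Ideal (𝓞 K) → Ideal (𝓞 K) → Prop} {p : ℕ} {I J L I' J' C : Ideal (𝓞 K)}

theorem pLt_irrefl : ¬ pLt plt p I I := by
  rintro (h | ⟨_, h | ⟨_, _, _, _, _, _, h⟩⟩) <;> exact lt_irrefl _ h

theorem pLt_trans (htrans : ∀ a b c, plt a b → plt b c → plt a c)
    (htot : ∀ q q' : Ideal (𝓞 K), q.IsPrime → q'.IsPrime → q ≠ ⊥ → q' ≠ ⊥ → q ≠ q' →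
      plt q q' ∨ plt q' q)
    (h₁ : pLt plt p I J) (h₂ : pLt plt p J L) : pLt plt p I L := by
  rcases h₁ with hn₁ | ⟨hn₁, hw₁⟩ <;> rcases h₂ with hn₂ | ⟨hn₂, hw₂⟩
  · exact .inl (hn₁.trans hn₂)
  · exact .inl (hn₂ ▸ hn₁)
  · exact .inl (hn₁ ▸ hn₂)
  refine .inr ⟨hn₁.trans hn₂, ?_⟩
  rcases hw₁ with hw₁ | ⟨hw₁, hr₁⟩ <;> rcases hw₂ with hw₂ | ⟨hw₂, hr₂⟩
  · exact .inl (hw₁.trans hw₂)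
  · exact .inl (hw₂ ▸ hw₁)
  · exact .inl (hw₁ ▸ hw₂)
  exact .inr ⟨hw₁.trans hw₂, revLexLt_trans htrans htot hr₁ hr₂⟩

theorem pLt_congr (hp : p ≠ 0) (hI : pPart p I = pPart p I') (hJ : pPart p J = pPart p J')
    (h : pLt plt p I J) : pLt plt p I' J' := by
  have hvI := (pPart_eq_pPart_iff hp).1 hI
  have hvJ := (pPart_eq_pPart_iff hp).1 hJ
  unfold pLt at *
  rw [← hI, ← hJ, ← pWeight_congr hvI, ← pWeight_congr hvJ]
  rcases h with hn | ⟨hn, hw | ⟨hw, hr⟩⟩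
  · exact .inl hn
  · exact .inr ⟨hn, .inl hw⟩
  · exact .inr ⟨hn, .inr ⟨hw, revLexLt_congr hvI hvJ hr⟩⟩

theorem pLt_or_pLt (htrans : ∀ a b c, plt a b → plt b c → plt a c) (hirr : ∀ a, ¬ plt a a)
    (hp : p ≠ 0) (hne : pPart p I ≠ pPart p J) :
    pLt plt p I J ∨ pLt plt p J I := by
  rcases ne_or_eq (absNorm (pPart p I)) (absNorm (pPart p J)) with hn | hn
  · exact hn.lt_or_gt.imp .inl .inl
  rcases ne_or_eq (pWeight p I) (pWeight p J) with hw | hw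
  · exact hw.lt_or_gt.imp (fun hw => .inr ⟨hn, .inl hw⟩) (fun hw => .inr ⟨hn.symm, .inl hw⟩)
  have hdiff : ∃ q ∈ primesAbove K p, vP q I ≠ vP q J := by
    by_contra! h
    exact hne ((pPart_eq_pPart_iff hp).2 h)
  rcases revLexLt_or_revLexLt htrans hirr hp hdiff with hr | hr
  · exact .inl (.inr ⟨hn, .inr ⟨hw, hr⟩⟩)
  · exact .inr (.inr ⟨hn.symm, .inr ⟨hw.symm, hr⟩⟩)

theorem pLt_mul_right (hp : p ≠ 0) (hI : I ≠ ⊥) (hJ : J ≠ ⊥) (hC : C ≠ ⊥)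
    (h : pLt plt p I J) : pLt plt p (I * C) (J * C) := by
  have hC₀ : 0 < absNorm (pPart p C) :=
    Nat.pos_of_ne_zero (absNorm_eq_zero_iff.not.2 (pPart_ne_bot hp))
  unfold pLt at *
  rw [pPart_mul hp hI hC, pPart_mul hp hJ hC, map_mul, map_mul, pWeight_mul hp hI hC,
    pWeight_mul hp hJ hC, mul_lt_mul_iff_left₀ hC₀, mul_left_inj' hC₀.ne', Nat.add_right_cancel_iff,
    Nat.add_lt_add_iff_right]
  rcases h with hn | ⟨hn, hw | ⟨hw, hr⟩⟩
  · exact .inl hn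
  · exact .inr ⟨hn, .inl hw⟩
  · exact .inr ⟨hn, .inr ⟨hw, revLexLt_mul_right hI hJ hC hr⟩⟩

end PLt

section IdealLt

variable {plt : Ideal (𝓞 K) → Ideal (𝓞 K) → Prop} {I J L C : Ideal (𝓞 K)}

theorem idealLt_irrefl : ¬ idealLt plt I I := by
  rintro (h | ⟨_, _, _, _, h, _⟩)
  exacts [lt_irrefl _ h, h rfl]

theorem idealLt_trans (htrans : ∀ a b c, plt a b → plt b c → plt a c)
    (htot : ∀ q q' : Ideal (𝓞 K), q.IsPrime → q'.IsPrime → q ≠ ⊥ → q' ≠ ⊥ → q ≠ q' →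
      plt q q' ∨ plt q' q)
    (h₁ : idealLt plt I J) (h₂ : idealLt plt J L) : idealLt plt I L := by
  rcases h₁ with hn₁ | ⟨hn₁, p₁, hp₁, hpre₁, hne₁, hlt₁⟩ <;>
    rcases h₂ with hn₂ | ⟨hn₂, p₂, hp₂, hpre₂, hne₂, hlt₂⟩
  · exact .inl (hn₁.trans hn₂)
  · exact .inl (hn₂ ▸ hn₁)
  · exact .inl (hn₁ ▸ hn₂)
  refine .inr ⟨hn₁.trans hn₂, ?_⟩
  rcases lt_trichotomy p₁ p₂ with h | rfl | h
  · have hJL := hpre₂ p₁ hp₁ h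
    exact ⟨p₁, hp₁, fun r hr hrp => (hpre₁ r hr hrp).trans (hpre₂ r hr (hrp.trans h)),
      fun hIL => hne₁ (hIL.trans hJL.symm), pLt_congr hp₁.ne_zero rfl hJL hlt₁⟩
  · have hlt := pLt_trans htrans htot hlt₁ hlt₂
    refine ⟨p₁, hp₁, fun r hr hrp => (hpre₁ r hr hrp).trans (hpre₂ r hr hrp), fun hIL => ?_, hlt⟩
    exact pLt_irrefl (pLt_congr hp₁.ne_zero rfl hIL.symm hlt)
  · have hIJ := hpre₁ p₂ hp₂ h
    exact ⟨p₂, hp₂, fun r hr hrp => (hpre₁ r hr (hrp.trans h)).trans (hpre₂ r hr hrp),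
      fun hIL => hne₂ (hIJ.symm.trans hIL), pLt_congr hp₂.ne_zero hIJ.symm rfl hlt₂⟩

theorem exists_prime_pPart_ne (hI : I ≠ ⊥) (hJ : J ≠ ⊥) (hne : I ≠ J) :
    ∃ p : ℕ, p.Prime ∧ pPart p I ≠ pPart p J := by
  obtain ⟨q, hq, hqne⟩ : ∃ q, Prime q ∧ vP q I ≠ vP q J := by
    by_contra! h
    exact hne (eq_of_forall_vP_eq hI hJ h)
  obtain ⟨p, hp, hqp⟩ := exists_prime_mem_primesAbove (isPrime_of_prime hq) hq.ne_zero
  exact ⟨p, hp, fun h => hqne ((pPart_eq_pPart_iff hp.ne_zero).1 h q hqp)⟩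

theorem idealLt_or_idealLt (htrans : ∀ a b c, plt a b → plt b c → plt a c)
    (hirr : ∀ a, ¬ plt a a) (hI : I ≠ ⊥) (hJ : J ≠ ⊥) (hne : I ≠ J) :
    idealLt plt I J ∨ idealLt plt J I := by
  classical
  rcases ne_or_eq (absNorm I) (absNorm J) with hn | hn
  · exact hn.lt_or_gt.imp .inl .inl
  have hex := exists_prime_pPart_ne hI hJ hne
  obtain ⟨hp, hpne⟩ := Nat.find_spec hex
  have hmin : ∀ r : ℕ, r.Prime → r < Nat.find hex → pPart r I = pPart r J :=
    fun r hr hrp => of_not_not fun h => Nat.find_min hex hrp ⟨hr, h⟩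
  rcases pLt_or_pLt htrans hirr hp.ne_zero hpne with h | h
  · exact .inl (.inr ⟨hn, _, hp, hmin, hpne, h⟩)
  · exact .inr (.inr ⟨hn.symm, _, hp, fun r hr hrp => (hmin r hr hrp).symm, hpne.symm, h⟩)

theorem idealLt_mul_right (hI : I ≠ ⊥) (hJ : J ≠ ⊥) (hC : C ≠ ⊥) (h : idealLt plt I J) :
    idealLt plt (I * C) (J * C) := by
  have hC₀ : 0 < absNorm C := Nat.pos_of_ne_zero (absNorm_eq_zero_iff.not.2 hC)
  have hpart : ∀ p : ℕ, p.Prime →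
      (pPart p (I * C) = pPart p (J * C) ↔ pPart p I = pPart p J) := fun p hp => by
    rw [pPart_mul hp.ne_zero hI hC, pPart_mul hp.ne_zero hJ hC,
      mul_left_inj' (pPart_ne_bot hp.ne_zero)]
  unfold idealLt at *
  rw [map_mul, map_mul, mul_lt_mul_iff_left₀ hC₀, mul_left_inj' hC₀.ne']
  rcases h with hn | ⟨hn, p, hp, hpre, hne, hlt⟩
  · exact .inl hn
  · exact .inr ⟨hn, p, hp, fun r hr hrp => (hpart r hr).2 (hpre r hr hrp),
      (hpart p hp).not.2 hne, pLt_mul_right hp.ne_zero hI hJ hC hlt⟩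

end IdealLt

/-- Given any strict total order `plt` on the nonzero prime ideals of a
number field `K` (such as the one defined in the paper), the ordering of nonzero integral
ideals defined by sorting first by norm, then by the prime-power components at each
rational prime (in increasing order of the rational primes, each component compared by the
`p`-power-norm order), is a total order compatible with multiplication: if `𝔞 < 𝔟` then
`𝔞𝔠 < 𝔟𝔠`.  In other words, it makes the nonzero integral ideals a totally ordered
monoid. -/
theorem idealLt_isStrictTotalOrder_and_mul_compat
    (plt : Ideal (𝓞 K) → Ideal (𝓞 K) → Prop)
    (htrans : ∀ a b c : Ideal (𝓞 K), plt a b → plt b c → plt a c)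
    (hirr : ∀ a : Ideal (𝓞 K), ¬ plt a a)
    (htot : ∀ q q' : Ideal (𝓞 K), q.IsPrime → q'.IsPrime → q ≠ ⊥ → q' ≠ ⊥ → q ≠ q' →
      plt q q' ∨ plt q' q) :
    IsStrictTotalOrder {I : Ideal (𝓞 K) // I ≠ ⊥} (fun I J => idealLt plt I.1 J.1) ∧
      ∀ I J C : Ideal (𝓞 K), I ≠ ⊥ → J ≠ ⊥ → C ≠ ⊥ →
        idealLt plt I J → idealLt plt (I * C) (J * C) := by
  refine ⟨{ trichotomous := ?_, irrefl := ?_, trans := ?_ },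
    fun I J C hI hJ hC => idealLt_mul_right hI hJ hC⟩
  · intro I J hIJ hJI
    by_contra hne
    exact (idealLt_or_idealLt htrans hirr I.2 J.2 (Subtype.coe_ne_coe.2 hne)).elim hIJ hJI
  · exact fun _ => idealLt_irrefl
  · exact fun _ _ _ => idealLt_trans htrans htot
end
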